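/- arXiv:2301.02106 — 3 statements merged into one kernel-verified Lean document; each statement's English description precedes it below -/
import Mathlib

section
/- For real numbers ℓ, L with L ≥ ℓ > 0 and ε₀ ≥ 1, the two inequalities 2ℓ − Lε₀ > 0 and ε₀ > (ℓε₀ + √(ℓ²ε₀² − 2ℓLε₀ + L²ε₀²)) / (2ℓ − Lε₀) cannot both hold. -/
theorem h2_inequalities_contradictory (ℓ L ε₀ : ℝ) (hℓL : ℓ ≤ L) (hℓ : 0 < ℓ)
    (hε₀ : ε₀ ≥ 1) :
    ¬ (2 * ℓ - L * ε₀ > 0 ∧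
      ε₀ > (ℓ * ε₀ + Real.sqrt (ℓ ^ 2 * ε₀ ^ 2 - 2 * ℓ * L * ε₀ + L ^ 2 * ε₀ ^ 2)) /
        (2 * ℓ - L * ε₀)) := by
  rintro ⟨hden, hlt⟩
  -- Cleared of its denominator, the second inequality says ε₀ (ℓ - L ε₀) > √(…) ≥ 0,
  -- whatever the radicand; but ℓ ≤ L ε₀.
  have hε₀_nonneg : 0 ≤ ε₀ := zero_le_one.trans hε₀
  have hℓ_le : ℓ ≤ L * ε₀ := hℓL.trans (le_mul_of_one_le_right (hℓ.le.trans hℓL) hε₀)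
  have hnum : ε₀ * (2 * ℓ - L * ε₀) ≤ ℓ * ε₀ := by
    nlinarith [mul_le_mul_of_nonneg_left hℓ_le hε₀_nonneg]
  refine hlt.not_ge ((le_div_iff₀ hden).2 ?_)
  exact hnum.trans (le_add_of_nonneg_right (Real.sqrt_nonneg _))
end

section
/- If a set T ⊂ ℝ³∖{0} satisfies Hypothesis H1 (compact, contained in a half space, ℓ = min_{x∈T}|x| > 0, and 2ℓc > L where c = min_{x,y∈T}⟨x/|x|, y/|y|⟩ and L = max_{x∈T}|x|), then T does not satisfy both inequalities 2ℓ − Lε₀ > 0 and ε₀ > (ℓε₀ + √(ℓ²ε₀² − 2ℓLε₀ + L²ε₀²))/(2ℓ − Lε₀), where ε₀ = (ℓ + √(ℓ² − 2Lℓc + L²))/(2ℓc − L). -/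
/-!
Write `ε₀ = (ℓ + s) / (2ℓc - L)` with `s ≥ 0`. Since `c ≤ 1` (Cauchy–Schwarz for unit vectors) and
`ℓ ≤ L`, we have `ℓ + s ≥ ℓ ≥ 2ℓc - L`, so `ε₀ ≥ 1`. Clearing the positive denominator `2ℓ - Lε₀` in
the second inequality leaves `√(…) < ε₀ (ℓ - Lε₀) ≤ ε₀ (ℓ - L) ≤ 0`, which is absurd.
-/

open scoped RealInnerProductSpace

theorem real_inner_inv_norm_smul_le_one {E : Type*} [NormedAddCommGroup E]
    [InnerProductSpace ℝ E] (x y : E) : ⟪‖x‖⁻¹ • x, ‖y‖⁻¹ • y⟫ ≤ 1 := by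
  have hx := mem_closedBall_zero_iff.mp (inv_norm_smul_mem_unitClosedBall x)
  have hy := mem_closedBall_zero_iff.mp (inv_norm_smul_mem_unitClosedBall y)
  calc ⟪‖x‖⁻¹ • x, ‖y‖⁻¹ • y⟫ ≤ ‖‖x‖⁻¹ • x‖ * ‖‖y‖⁻¹ • y‖ := real_inner_le_norm _ _
    _ ≤ 1 * 1 := mul_le_mul hx hy (norm_nonneg _) zero_le_one
    _ = 1 := one_mul 1

theorem one_le_add_div_two_mul_mul_sub {ℓ L c s : ℝ} (hℓ : 0 ≤ ℓ) (hℓL : ℓ ≤ L) (hc : c ≤ 1)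
    (hLc : L < 2 * ℓ * c) (hs : 0 ≤ s) : 1 ≤ (ℓ + s) / (2 * ℓ * c - L) := by
  rw [one_le_div (by linarith)]
  nlinarith

theorem not_H2_of_one_le {ℓ L e : ℝ} (hL : 0 ≤ L) (hℓL : ℓ ≤ L) (he : 1 ≤ e) :
    ¬ (2 * ℓ - L * e > 0 ∧
      e > (ℓ * e + Real.sqrt (ℓ ^ 2 * e ^ 2 - 2 * ℓ * L * e + L ^ 2 * e ^ 2)) / (2 * ℓ - L * e)) := by
  rintro ⟨hden, hgt⟩
  rw [gt_iff_lt, div_lt_iff₀ hden] at hgt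
  have hsqrt := Real.sqrt_nonneg (ℓ ^ 2 * e ^ 2 - 2 * ℓ * L * e + L ^ 2 * e ^ 2)
  have hLe : L ≤ L * e := le_mul_of_one_le_right hL he
  nlinarith

theorem H1_not_H2_general (T : Set (EuclideanSpace ℝ (Fin 3))) (ℓ L c : ℝ)
    (hℓmin : IsLeast ((fun x => ‖x‖) '' T) ℓ)
    (hLmax : IsGreatest ((fun x => ‖x‖) '' T) L)
    (hcmin : IsLeast ((fun p : EuclideanSpace ℝ (Fin 3) × EuclideanSpace ℝ (Fin 3) =>
      ⟪‖p.1‖⁻¹ • p.1, ‖p.2‖⁻¹ • p.2⟫) '' (T ×ˢ T)) c)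
    (hℓpos : 0 < ℓ) (hH1 : 2 * ℓ * c > L) :
    ¬ (2 * ℓ - L * ((ℓ + Real.sqrt (ℓ ^ 2 - 2 * L * ℓ * c + L ^ 2)) / (2 * ℓ * c - L)) > 0 ∧
      (ℓ + Real.sqrt (ℓ ^ 2 - 2 * L * ℓ * c + L ^ 2)) / (2 * ℓ * c - L) >
        (ℓ * ((ℓ + Real.sqrt (ℓ ^ 2 - 2 * L * ℓ * c + L ^ 2)) / (2 * ℓ * c - L)) +
          Real.sqrt (ℓ ^ 2 * ((ℓ + Real.sqrt (ℓ ^ 2 - 2 * L * ℓ * c + L ^ 2)) / (2 * ℓ * c - L)) ^ 2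
            - 2 * ℓ * L * ((ℓ + Real.sqrt (ℓ ^ 2 - 2 * L * ℓ * c + L ^ 2)) / (2 * ℓ * c - L))
            + L ^ 2 * ((ℓ + Real.sqrt (ℓ ^ 2 - 2 * L * ℓ * c + L ^ 2)) / (2 * ℓ * c - L)) ^ 2)) /
        (2 * ℓ - L * ((ℓ + Real.sqrt (ℓ ^ 2 - 2 * L * ℓ * c + L ^ 2)) / (2 * ℓ * c - L)))) := by
  have hℓL : ℓ ≤ L := hLmax.2 hℓmin.1
  have hc : c ≤ 1 := by
    obtain ⟨⟨x, y⟩, -, rfl⟩ := hcmin.1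
    exact real_inner_inv_norm_smul_le_one x y
  exact not_H2_of_one_le (hℓpos.le.trans hℓL) hℓL
    (one_le_add_div_two_mul_mul_sub hℓpos.le hℓL hc hH1 (Real.sqrt_nonneg _))

theorem H1_not_H2 (T : Set (EuclideanSpace ℝ (Fin 3))) (ℓ L c : ℝ)
    (hTne : T.Nonempty) (hTcompact : IsCompact T) (h0T : (0 : EuclideanSpace ℝ (Fin 3)) ∉ T)
    (hhalf : ∃ v : EuclideanSpace ℝ (Fin 3), v ≠ 0 ∧ ∀ x ∈ T, 0 ≤ ⟪v, x⟫)
    (hℓmin : IsLeast ((fun x => ‖x‖) '' T) ℓ)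
    (hLmax : IsGreatest ((fun x => ‖x‖) '' T) L)
    (hcmin : IsLeast ((fun p : EuclideanSpace ℝ (Fin 3) × EuclideanSpace ℝ (Fin 3) =>
      ⟪‖p.1‖⁻¹ • p.1, ‖p.2‖⁻¹ • p.2⟫) '' (T ×ˢ T)) c)
    (hℓpos : 0 < ℓ) (hH1 : 2 * ℓ * c > L) :
    ¬ (2 * ℓ - L * ((ℓ + Real.sqrt (ℓ ^ 2 - 2 * L * ℓ * c + L ^ 2)) / (2 * ℓ * c - L)) > 0 ∧
      (ℓ + Real.sqrt (ℓ ^ 2 - 2 * L * ℓ * c + L ^ 2)) / (2 * ℓ * c - L) >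
        (ℓ * ((ℓ + Real.sqrt (ℓ ^ 2 - 2 * L * ℓ * c + L ^ 2)) / (2 * ℓ * c - L)) +
          Real.sqrt (ℓ ^ 2 * ((ℓ + Real.sqrt (ℓ ^ 2 - 2 * L * ℓ * c + L ^ 2)) / (2 * ℓ * c - L)) ^ 2
            - 2 * ℓ * L * ((ℓ + Real.sqrt (ℓ ^ 2 - 2 * L * ℓ * c + L ^ 2)) / (2 * ℓ * c - L))
            + L ^ 2 * ((ℓ + Real.sqrt (ℓ ^ 2 - 2 * L * ℓ * c + L ^ 2)) / (2 * ℓ * c - L)) ^ 2)) /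
        (2 * ℓ - L * ((ℓ + Real.sqrt (ℓ ^ 2 - 2 * L * ℓ * c + L ^ 2)) / (2 * ℓ * c - L)))) :=
  H1_not_H2_general T ℓ L c hℓmin hLmax hcmin hℓpos hH1
end

section
/- Let ℓ, L > 0 with ℓ < L < 2ℓ. Then for unit vectors m with ⟨m, u⟩ > 0 (u a fixed unit vector), the inequality L/(2⟨m,u⟩) < ℓ(1−ε²)/(2ε(1−ε⟨m,u⟩)) holds for all such m if and only if L/2 < ℓ(1−ε²)/(2ε(1−ε)), i.e. if and only if ε < 1/(L/ℓ − 1); here ε > 1. -/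
/-! With `t = ⟪m, u⟫ ∈ (1/ε, 1]`, clearing the (positive) denominators turns the inequality into
`t * ((L - ℓ) ε² + ℓ) < L ε`, which is monotone in `t` because `L > ℓ`; so it holds for all
admissible `m` iff it holds at `m = u`, i.e. `t = 1`. There the difference factors as
`(ε - 1) (ε (L - ℓ) - ℓ)`, giving `ε (L - ℓ) < ℓ`. -/

open scoped RealInnerProductSpace

open Set

theorem forall_norm_eq_one_inner_iff {E : Type*} [NormedAddCommGroup E] [InnerProductSpace ℝ E]
    {u : E} (hu : ‖u‖ = 1) {a : ℝ} (ha : a < 1) {P : ℝ → Prop}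
    (hP : ∀ t ∈ Ioc a 1, P 1 → P t) :
    (∀ m : E, ‖m‖ = 1 → a < ⟪m, u⟫ → P ⟪m, u⟫) ↔ P 1 := by
  have huu : ⟪u, u⟫ = 1 := inner_self_eq_one_of_norm_eq_one hu
  refine ⟨fun h ↦ huu ▸ h u hu (huu ▸ ha), fun h1 m hm ham ↦ hP _ ⟨ham, ?_⟩ h1⟩
  simpa [hm, hu] using real_inner_le_norm m u

section Hyperboloid

variable {ℓ L ε t : ℝ}

theorem div_lt_hyperboloid_iff (hε : 0 < ε) (ht : 0 < t) (hεt : 1 < ε * t) :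
    L / (2 * t) < ℓ * (1 - ε ^ 2) / (2 * ε * (1 - ε * t)) ↔
      t * ((L - ℓ) * ε ^ 2 + ℓ) < L * ε := by
  rw [← neg_div_neg_eq (ℓ * _), div_lt_div_iff₀ (by positivity) (by nlinarith)]
  constructor <;> intro h <;> linarith

theorem sub_mul_sq_add_lt_mul_iff (hε : 1 < ε) :
    (L - ℓ) * ε ^ 2 + ℓ < L * ε ↔ ε * (L - ℓ) < ℓ := by
  have factor : (L - ℓ) * ε ^ 2 + ℓ - L * ε = (ε - 1) * (ε * (L - ℓ) - ℓ) := by ring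
  rw [← sub_neg, factor, mul_neg_iff]
  constructor
  · rintro (⟨-, h⟩ | ⟨h, -⟩) <;> linarith
  · intro h; left; constructor <;> linarith

end Hyperboloid

theorem directrix_inside_hyperboloid_iff_general (ℓ L ε : ℝ) (u : EuclideanSpace ℝ (Fin 3))
    (hu : ‖u‖ = 1) (hℓ : 0 < ℓ) (hℓL : ℓ < L) (hε : 1 < ε) :
    ((∀ m : EuclideanSpace ℝ (Fin 3), ‖m‖ = 1 → 1 / ε < ⟪m, u⟫ →
        L / (2 * ⟪m, u⟫) < ℓ * (1 - ε ^ 2) / (2 * ε * (1 - ε * ⟪m, u⟫)))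
      ↔ L / 2 < ℓ * (1 - ε ^ 2) / (2 * ε * (1 - ε))) ∧
    (L / 2 < ℓ * (1 - ε ^ 2) / (2 * ε * (1 - ε)) ↔ ε < 1 / (L / ℓ - 1)) := by
  have hε0 : 0 < ε := by linarith
  have at_one : L / 2 < ℓ * (1 - ε ^ 2) / (2 * ε * (1 - ε)) ↔ (L - ℓ) * ε ^ 2 + ℓ < L * ε := by
    simpa only [mul_one, one_mul] using div_lt_hyperboloid_iff hε0 one_pos (by simpa)
  have from_one : ∀ t ∈ Ioc (1 / ε) 1,
      L / (2 * 1) < ℓ * (1 - ε ^ 2) / (2 * ε * (1 - ε * 1)) →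
        L / (2 * t) < ℓ * (1 - ε ^ 2) / (2 * ε * (1 - ε * t)) := by
    rintro t ⟨hat, ht1⟩ h1
    have hεt : 1 < ε * t := (div_lt_iff₀' hε0).1 hat
    have hc : 0 ≤ (L - ℓ) * ε ^ 2 + ℓ := by nlinarith
    rw [div_lt_hyperboloid_iff hε0 (lt_trans (by positivity) hat) hεt]
    rw [div_lt_hyperboloid_iff hε0 one_pos (by simpa), one_mul] at h1
    exact (mul_le_of_le_one_left hc ht1).trans_lt h1
  refine ⟨?_, ?_⟩
  · simpa only [mul_one] using
      forall_norm_eq_one_inner_iff hu ((div_lt_one hε0).2 hε)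
        (P := fun t ↦ L / (2 * t) < ℓ * (1 - ε ^ 2) / (2 * ε * (1 - ε * t))) from_one
  · rw [at_one, sub_mul_sq_add_lt_mul_iff hε, div_sub_one hℓ.ne',
      one_div_div, lt_div_iff₀ (by linarith)]

theorem directrix_inside_hyperboloid_iff (ℓ L ε : ℝ) (u : EuclideanSpace ℝ (Fin 3))
    (hu : ‖u‖ = 1) (hℓ : 0 < ℓ) (hℓL : ℓ < L) (hL2 : L < 2 * ℓ) (hε : 1 < ε) :
    ((∀ m : EuclideanSpace ℝ (Fin 3), ‖m‖ = 1 → 1 / ε < ⟪m, u⟫ →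
        L / (2 * ⟪m, u⟫) < ℓ * (1 - ε ^ 2) / (2 * ε * (1 - ε * ⟪m, u⟫)))
      ↔ L / 2 < ℓ * (1 - ε ^ 2) / (2 * ε * (1 - ε))) ∧
    (L / 2 < ℓ * (1 - ε ^ 2) / (2 * ε * (1 - ε)) ↔ ε < 1 / (L / ℓ - 1)) :=
  directrix_inside_hyperboloid_iff_general ℓ L ε u hu hℓ hℓL hε
end
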